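/- arXiv:2403.00958 — 2 statements merged into one kernel-verified Lean document; each statement's English description precedes it below -/
import Mathlib

section
/- If P is a type-C poset of height one such that the relation graph RG(P) is a tree with |V(P)| > 1, then g_C(P) is contact. Moreover, if p_0 ∈ P^+ corresponds to a fixed vertex of degree one in RG(P), E_D denotes the set of dashed edges of RG(P) and E_{\bar D} the set of non-dashed edges, then the functional φ = (D_{p_0})* + Σ_{{p,q} ∈ E_{\bar D}} (R^±_{p,q})* + Σ_{{p,q} ∈ E_D, p<q} (R_{p,q})* (sum of dual-basis vectors with respect to the standard basis of g_C(P)) is a contact form for g_C(P). -/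
open scoped DirectSum

attribute [local instance 100] LieRing.ofAssociativeRing

namespace LiePoset

/-- A type-C poset on the ground set `{-n, …, -1, 1, …, n} ⊆ ℤ`:
a partial order `le` supported on that set such that `i ≼ j` implies `i ≤ j` in `ℤ`,
and for `i ≠ -j`, `i ≼ j ↔ -j ≼ -i`. -/
structure TypeCPoset (n : ℕ) where
  le : ℤ → ℤ → Prop
  supp : ∀ ⦃i j : ℤ⦄, le i j → i ≠ 0 ∧ |i| ≤ (n : ℤ) ∧ j ≠ 0 ∧ |j| ≤ (n : ℤ)
  refl : ∀ i : ℤ, i ≠ 0 → |i| ≤ (n : ℤ) → le i i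
  antisymm : ∀ ⦃i j : ℤ⦄, le i j → le j i → i = j
  trans : ∀ ⦃i j k : ℤ⦄, le i j → le j k → le i k
  compat : ∀ ⦃i j : ℤ⦄, le i j → i ≤ j
  nsymm : ∀ ⦃i j : ℤ⦄, i ≠ -j → (le i j ↔ le (-j) (-i))

namespace TypeCPoset

variable {n : ℕ}

/-- The strict relation `i ≺ j` of a type-C poset. -/
def lt (P : TypeCPoset n) (i j : ℤ) : Prop := P.le i j ∧ i ≠ j

/-- `P` has height one: every chain of `P` has cardinality at most two. -/
def HeightOne (P : TypeCPoset n) : Prop := ∀ i j k : ℤ, P.lt i j → P.lt j k → False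

/-- `P` is separable: there is no relation `x ≺ y` with `x` negative and `y` positive. -/
def Separable (P : TypeCPoset n) : Prop := ∀ i j : ℤ, i < 0 → 0 < j → ¬ P.lt i j

/-- `P` has height `(1,1)`: `P⁺` has height exactly one and `P` has height exactly one. -/
def Height11 (P : TypeCPoset n) : Prop :=
  P.HeightOne ∧ ∃ i j : ℤ, 0 < i ∧ 0 < j ∧ P.lt i j

/-- `P` has height `(0,1)`: `P⁺` has height zero and `P` has height exactly one. -/
def Height01 (P : TypeCPoset n) : Prop :=
  P.HeightOne ∧ (∀ i j : ℤ, 0 < i → 0 < j → ¬ P.lt i j) ∧ ∃ i j : ℤ, P.lt i j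

end TypeCPoset

/-- The vertex set of the relation graph: the positive elements `{1, …, n}`. -/
abbrev Pos (n : ℕ) : Type := {i : ℤ // i ∈ Finset.Icc (1 : ℤ) (n : ℤ)}

/-- The matrix index set `{-n, …, -1, 1, …, n}`. -/
abbrev Idx (n : ℕ) : Type := {i : ℤ // i ∈ (Finset.Icc (-(n : ℤ)) (n : ℤ)).erase 0}

/-- Negation on the index set. -/
def Idx.neg {n : ℕ} (a : Idx n) : Idx n :=
  ⟨-a.val, by
    have h := a.property
    simp only [Finset.mem_erase, Finset.mem_Icc] at h ⊢
    omega⟩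

/-- A positive vertex as a matrix index. -/
def Pos.toIdx {n : ℕ} (i : Pos n) : Idx n :=
  ⟨i.val, by
    have h := i.property
    simp only [Finset.mem_erase, Finset.mem_Icc] at h ⊢
    omega⟩

/-- `2n × 2n` complex matrices, with rows and columns indexed by `{-n, …, -1, 1, …, n}`. -/
abbrev Mat (n : ℕ) : Type := Matrix (Idx n) (Idx n) ℂ

namespace TypeCPoset

variable {n : ℕ}

/-- `D_i = E_{-i,-i} - E_{i,i}`. -/
def Dmat (i : Pos n) : Mat n :=
  Matrix.single i.toIdx.neg i.toIdx.neg 1 - Matrix.single i.toIdx i.toIdx 1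

/-- `R^±_{i,j} = E_{-i,j} + E_{-j,i}`. -/
def Rpm (i j : Pos n) : Mat n :=
  Matrix.single i.toIdx.neg j.toIdx 1 + Matrix.single j.toIdx.neg i.toIdx 1

/-- `R_{i,j} = E_{-j,-i} - E_{i,j}`. -/
def Rdash (i j : Pos n) : Mat n :=
  Matrix.single j.toIdx.neg i.toIdx.neg 1 - Matrix.single i.toIdx j.toIdx 1

/-- `E_{-i,i}`. -/
def Eloop (i : Pos n) : Mat n := Matrix.single i.toIdx.neg i.toIdx 1

/-- The standard spanning set of the type-C Lie poset algebra `g_C(P)`. -/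
def gcSet (P : TypeCPoset n) : Set (Mat n) :=
  {M | (∃ i : Pos n, M = Dmat i)
      ∨ (∃ i j : Pos n, P.lt (-j.val) (-i.val) ∧ M = Rdash i j)
      ∨ (∃ i j : Pos n, P.lt (-i.val) j.val ∧ P.lt (-j.val) i.val ∧ M = Rpm i j)
      ∨ (∃ i : Pos n, P.lt (-i.val) i.val ∧ M = Eloop i)}

/-- The simple graph underlying the relation graph `RG(P)`:
vertices `{1, …, n}`, with `i` adjacent to `j` (for `i ≠ j`) whenever there is a
(dashed or non-dashed) edge between them. -/
def RG (P : TypeCPoset n) : SimpleGraph (Pos n) where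
  Adj i j := i ≠ j ∧ (P.lt (-i.val) j.val ∨ P.lt (-j.val) i.val ∨
      P.lt (-i.val) (-j.val) ∨ P.lt (-j.val) (-i.val))
  symm := by
    refine ⟨fun i j h => ?_⟩
    exact ⟨h.1.symm, by tauto⟩
  loopless := by
    refine ⟨fun i h => ?_⟩
    exact h.1 rfl

/-- `RG(P)` has a (non-dashed) self-loop at vertex `i`, i.e. `-i ≺ i`. -/
def HasLoopAt (P : TypeCPoset n) (i : Pos n) : Prop := P.lt (-i.val) i.val

/-- There is a dashed edge `{i,j}` in `RG(P)`. -/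
def DashedEdge (P : TypeCPoset n) (i j : Pos n) : Prop :=
  P.lt (-i.val) (-j.val) ∨ P.lt (-j.val) (-i.val)

/-- There is a non-dashed edge `{i,j}` in `RG(P)` (a self-loop when `i = j`). -/
def NonDashedEdge (P : TypeCPoset n) (i j : Pos n) : Prop :=
  P.lt (-i.val) j.val ∨ P.lt (-j.val) i.val

open scoped Classical in
/-- The set of non-dashed edges of `RG(P)` (including self-loops). -/
noncomputable def edgesND (P : TypeCPoset n) : Finset (Sym2 (Pos n)) :=
  Finset.univ.filter fun e => ∃ i j : Pos n, e = Sym2.mk i j ∧ NonDashedEdge P i j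

open scoped Classical in
/-- The set of dashed edges of `RG(P)`. -/
noncomputable def edgesD (P : TypeCPoset n) : Finset (Sym2 (Pos n)) :=
  Finset.univ.filter fun e => ∃ i j : Pos n, e = Sym2.mk i j ∧ i ≠ j ∧ DashedEdge P i j

/-- `|E(P)|`, the number of edges of `RG(P)`. -/
noncomputable def numEdges (P : TypeCPoset n) : ℕ := (P.edgesND).card + (P.edgesD).card

/-- The cycles of `RG(P)`, recorded by their edge sets: a self-loop at `v`, or a cycle
of the underlying simple graph.  A cycle has an odd (resp. even) number of vertices
iff its edge set has odd (resp. even) cardinality. -/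
def cycles (P : TypeCPoset n) : Set (Finset (Sym2 (Pos n))) :=
  {s | ∃ v : Pos n, P.HasLoopAt v ∧ s = {Sym2.mk v v}} ∪
  {s | ∃ (v : Pos n) (p : (RG P).Walk v v), p.IsCycle ∧ s = p.edges.toFinset}

/-- The cycles of `RG(P)` contained in the connected component `c`. -/
def cyclesIn (P : TypeCPoset n) (c : (RG P).ConnectedComponent) :
    Set (Finset (Sym2 (Pos n))) :=
  {s | ∃ v : Pos n, (RG P).connectedComponentMk v = c ∧
    ((P.HasLoopAt v ∧ s = {Sym2.mk v v}) ∨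
      ∃ p : (RG P).Walk v v, p.IsCycle ∧ s = p.edges.toFinset)}

/-- `η(P)`: the number of connected components of `RG(P)` containing no odd cycles. -/
noncomputable def eta (P : TypeCPoset n) : ℕ :=
  Nat.card {c : (RG P).ConnectedComponent // ¬ ∃ s ∈ P.cyclesIn c, Odd s.card}

/-- The vertices visited by a cycle, recorded by its edge set. -/
def cycleVerts (s : Finset (Sym2 (Pos n))) : Set (Pos n) := {v | ∃ e ∈ s, v ∈ e}

end TypeCPoset

section LieDefs

variable (L : Type*) [LieRing L] [LieAlgebra ℂ L]

/-- The kernel of the bilinear form `B_φ(x, y) = φ⁅x, y⁆`. -/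
def coadjKernel (φ : Module.Dual ℂ L) : Submodule ℂ L where
  carrier := {x | ∀ y : L, φ ⁅x, y⁆ = 0}
  add_mem' := by
    intro a b ha hb y
    simp only [Set.mem_setOf_eq] at ha hb ⊢
    rw [add_lie, map_add, ha y, hb y, add_zero]
  zero_mem' := by
    intro y
    rw [zero_lie, map_zero]
  smul_mem' := by
    intro c x hx y
    simp only [Set.mem_setOf_eq] at hx ⊢
    rw [smul_lie, map_smul, hx y, smul_zero]

/-- The index of a Lie algebra: `ind g = min_{φ ∈ g*} dim ker(B_φ)`. -/
noncomputable def lieIndex : ℕ :=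
  sInf (Set.range fun φ : Module.Dual ℂ L => Module.finrank ℂ (coadjKernel L φ))

/-- `φ` is a contact form on `L`: `L` is odd-dimensional and the restriction of
`B_φ(x, y) = φ⁅x, y⁆` to `ker φ` is nondegenerate. -/
def IsContactForm (φ : Module.Dual ℂ L) : Prop :=
  Odd (Module.finrank ℂ L) ∧
    ∀ x : L, φ x = 0 → (∀ y : L, φ y = 0 → φ ⁅x, y⁆ = 0) → x = 0

/-- `L` is a contact Lie algebra. -/
def IsContact : Prop := ∃ φ : Module.Dual ℂ L, IsContactForm L φ

end LieDefs

end LiePoset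

/-!
The standard basis of `g_C(P)` consists of the diagonal elements `D_p`, spanning an abelian
subalgebra `𝔥`, and one root vector `V_e` for each edge `e` of `RG(P)` (`R^±_{i,j}` for a non-dashed
edge, `R_{i,j}` for a dashed one). All matrices `V_e` are supported on the strict relations of `P`,
so height one makes them commute, and `[D_p, V_e] = α_e(p) V_e` with `α_e = ε_i + ε_j` or
`ε_j - ε_i`. For `φ = ξ + Σ_e V_e*` the form `B_φ` vanishes on `𝔥 × 𝔥` and on the span of the
`V_e`, and pairs the two through the weight map `S : u ↦ (α_e(u))_e`; hence
`ker B_φ = ker S ⊕ ker Sᵀ`. Along an edge `{i, j}` an element of `ker S` satisfies `u_j = ± u_i`,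
so when `RG(P)` is a tree (`|E| = |V| - 1`) the kernel of `S` is a line on which `u_{p₀} ≠ 0`, and
`S` is onto. Thus `ker B_φ` is a line on which `φ` does not vanish, which makes `φ` a contact
form.
-/

section LinearAlgebra

open Module

variable {K V W : Type*} [Field K] [AddCommGroup V] [Module K V] [AddCommGroup W] [Module K W]
  [FiniteDimensional K V] [FiniteDimensional K W]

theorem LinearMap.surjective_and_ker_eq_span_of_disjoint {S : V →ₗ[K] W} {f : V →ₗ[K] K}
    (hdisj : Disjoint (LinearMap.ker S) (LinearMap.ker f))
    (hdim : finrank K W + 1 = finrank K V) :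
    Function.Surjective S ∧ ∃ t, LinearMap.ker S = K ∙ t ∧ f t ≠ 0 := by
  have hker_le : finrank K (LinearMap.ker S) ≤ 1 := by
    have hinj : Function.Injective (f ∘ₗ (LinearMap.ker S).subtype) := by
      rw [← LinearMap.ker_eq_bot, LinearMap.ker_comp]
      exact Submodule.disjoint_iff_comap_eq_bot.mp hdisj
    simpa using LinearMap.finrank_le_finrank_of_injective hinj
  have hrank := LinearMap.finrank_range_add_finrank_ker S
  have hrange := (LinearMap.range S).finrank_le
  have hker : finrank K (LinearMap.ker S) = 1 := by omega
  refine ⟨LinearMap.range_eq_top.mp (Submodule.eq_top_of_finrank_eq (by omega)), ?_⟩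
  obtain ⟨t, ht, ht0⟩ := Submodule.exists_mem_ne_zero_of_ne_bot (p := LinearMap.ker S)
    (by rintro h; rw [h, finrank_bot] at hker; exact zero_ne_one hker)
  refine ⟨t, eq_span_singleton_of_mem_of_finrank_eq_one hker ht ht0, fun hft => ht0 ?_⟩
  exact Submodule.disjoint_def.mp hdisj t ht hft

end LinearAlgebra

section Matrices

open Matrix

theorem Matrix.eq_zero_of_vecMul_eq_zero_of_surjective_mulVec {R m n : Type*} [CommRing R]
    [Fintype m] [Fintype n] [DecidableEq m] {A : Matrix m n R}
    (hA : Function.Surjective A.mulVec) {v : m → R} (hv : v ᵥ* A = 0) : v = 0 := by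
  funext i
  obtain ⟨u, hu⟩ := hA (Pi.single i 1)
  have := dotProduct_mulVec v A u
  rwa [hu, dotProduct_single, mul_one, hv, zero_dotProduct] at this

variable {ι R : Type*} [DecidableEq ι] [Fintype ι] [CommRing R]

theorem Matrix.lie_diagonal_single (d : ι → R) (a b : ι) (c : R) :
    ⁅diagonal d, single a b c⁆ = (d a - d b) • single a b c := by
  ext x y
  simp only [Ring.lie_def, sub_apply, diagonal_mul, mul_diagonal, smul_apply, single_apply,
    smul_eq_mul]
  split_ifs with h
  · obtain ⟨rfl, rfl⟩ := h
    ring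
  · ring

theorem Matrix.lie_diagonal_diagonal (d d' : ι → R) : ⁅diagonal d, diagonal d'⁆ = 0 := by
  rw [Ring.lie_def, diagonal_mul_diagonal, diagonal_mul_diagonal, sub_eq_zero]
  simp only [mul_comm]

end Matrices

namespace LiePoset

section ContactCriterion

variable {L : Type*} [LieRing L] [LieAlgebra ℂ L]

theorem isContactForm_of_coadjKernel_eq_span {φ : Module.Dual ℂ L} {z : L}
    (hodd : Odd (Module.finrank ℂ L)) (hker : coadjKernel L φ = ℂ ∙ z) (hz : φ z ≠ 0) :
    IsContactForm L φ := by
  refine ⟨hodd, fun x hx hxy => ?_⟩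
  have hzker : z ∈ coadjKernel L φ := hker ▸ Submodule.mem_span_singleton_self z
  have hxker : x ∈ coadjKernel L φ := by
    intro y
    -- `y` is a multiple of `z` modulo `ker φ`, and `z` is `B_φ`-orthogonal to everything
    have hy : φ (y - (φ y / φ z) • z) = 0 := by
      rw [map_sub, map_smul, smul_eq_mul, div_mul_cancel₀ _ hz, sub_self]
    have hxz : φ ⁅x, z⁆ = 0 := by rw [← lie_skew, map_neg, hzker x, neg_zero]
    have := hxy _ hy
    rwa [lie_sub, lie_smul, map_sub, map_smul, hxz, smul_zero, sub_zero] at this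
  obtain ⟨c, rfl⟩ := Submodule.mem_span_singleton.mp (hker ▸ hxker)
  rw [map_smul, smul_eq_mul, mul_eq_zero] at hx
  rw [hx.resolve_right hz, zero_smul]

theorem mem_coadjKernel_iff_basis {ι : Type*} [Fintype ι] (b : Module.Basis ι ℂ L)
    {φ : Module.Dual ℂ L} {x : L} : x ∈ coadjKernel L φ ↔ ∀ i, φ ⁅x, b i⁆ = 0 := by
  refine ⟨fun hx i => hx (b i), fun hx y => ?_⟩
  rw [← b.sum_repr y, lie_sum, map_sum]
  exact Finset.sum_eq_zero fun i _ => by rw [lie_smul, map_smul, hx i, smul_zero]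

end ContactCriterion

section WeightBasis

open Matrix

variable {L H E : Type*} [LieRing L] [LieAlgebra ℂ L] [Fintype H] [Fintype E]

structure IsWeightBasis (b : Module.Basis (H ⊕ E) ℂ L) (α : Matrix E H ℂ) : Prop where
  lie_inl_inl : ∀ p q, ⁅b (.inl p), b (.inl q)⁆ = 0
  lie_inr_inr : ∀ e f, ⁅b (.inr e), b (.inr f)⁆ = 0
  lie_inl_inr : ∀ p e, ⁅b (.inl p), b (.inr e)⁆ = α e p • b (.inr e)

namespace IsWeightBasis

variable {b : Module.Basis (H ⊕ E) ℂ L} {α : Matrix E H ℂ} {φ : Module.Dual ℂ L}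

theorem apply_lie_inl (hb : IsWeightBasis b α) (hφ : ∀ e, φ (b (.inr e)) = 1) (x : L)
    (q : H) :
    φ ⁅x, b (.inl q)⁆ = -((fun e => b.repr x (.inr e)) ᵥ* α) q := by
  conv_lhs => rw [← b.sum_repr x, Fintype.sum_sum_type, add_lie, sum_lie, sum_lie]
  simp only [smul_lie, hb.lie_inl_inl, ← lie_skew (b (.inr _)) (b (.inl q)), hb.lie_inl_inr,
    map_sum, map_smul, map_neg, hφ, smul_zero, Finset.sum_const_zero, zero_add, vecMul,
    dotProduct, smul_eq_mul, mul_neg, mul_one, Finset.sum_neg_distrib]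

theorem apply_lie_inr (hb : IsWeightBasis b α) (hφ : ∀ e, φ (b (.inr e)) = 1) (x : L)
    (e : E) :
    φ ⁅x, b (.inr e)⁆ = (α *ᵥ fun p => b.repr x (.inl p)) e := by
  conv_lhs => rw [← b.sum_repr x, Fintype.sum_sum_type, add_lie, sum_lie, sum_lie]
  simp only [smul_lie, hb.lie_inr_inr, hb.lie_inl_inr, map_sum, map_smul, hφ, smul_zero,
    Finset.sum_const_zero, add_zero, mulVec, dotProduct, smul_eq_mul, mul_one, mul_comm]

theorem mem_coadjKernel_iff (hb : IsWeightBasis b α) (hφ : ∀ e, φ (b (.inr e)) = 1) {x : L} :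
    x ∈ coadjKernel L φ ↔
      α *ᵥ (fun p => b.repr x (.inl p)) = 0 ∧ (fun e => b.repr x (.inr e)) ᵥ* α = 0 := by
  simp only [mem_coadjKernel_iff_basis b, Sum.forall, hb.apply_lie_inl hφ, hb.apply_lie_inr hφ,
    neg_eq_zero, funext_iff, Pi.zero_apply]
  exact and_comm

theorem coadjKernel_eq_span [DecidableEq E] (hb : IsWeightBasis b α)
    (hφ : ∀ e, φ (b (.inr e)) = 1) {t : H → ℂ}
    (hS : Function.Surjective α.mulVecLin) (hker : LinearMap.ker α.mulVecLin = ℂ ∙ t) :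
    coadjKernel L φ = ℂ ∙ b.equivFun.symm (Sum.elim t 0) := by
  ext x
  rw [hb.mem_coadjKernel_iff hφ, Submodule.mem_span_singleton]
  constructor
  · rintro ⟨ha, hc⟩
    obtain ⟨k, hk⟩ := Submodule.mem_span_singleton.mp (hker ▸ LinearMap.mem_ker.mpr ha)
    have hc0 := eq_zero_of_vecMul_eq_zero_of_surjective_mulVec hS hc
    refine ⟨k, b.equivFun.injective ?_⟩
    rw [map_smul, LinearEquiv.apply_symm_apply, b.equivFun_apply]
    funext i
    rcases i with p | e
    · exact congrFun hk p
    · simpa using (congrFun hc0 e).symm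
  · rintro ⟨k, rfl⟩
    have hz : ∀ i, b.repr (b.equivFun.symm (Sum.elim t 0)) i = Sum.elim t 0 i := fun i =>
      congrFun (b.equivFun.apply_symm_apply _) i
    have ht : α *ᵥ t = 0 := LinearMap.mem_ker.mp (hker ▸ Submodule.mem_span_singleton_self t)
    simp only [map_smul, Finsupp.smul_apply, hz, Sum.elim_inl, Sum.elim_inr]
    exact ⟨by rw [← Pi.smul_def, mulVec_smul, ht, smul_zero],
      by simp only [Pi.zero_apply, smul_zero]; exact zero_vecMul α⟩

theorem isContactForm (hb : IsWeightBasis b α) (hφ : ∀ e, φ (b (.inr e)) = 1) {t : H → ℂ}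
    (hS : Function.Surjective α.mulVecLin) (hker : LinearMap.ker α.mulVecLin = ℂ ∙ t)
    (ht : ∑ p, t p * φ (b (.inl p)) ≠ 0) : IsContactForm L φ := by
  classical
  have hz : φ (b.equivFun.symm (Sum.elim t 0)) = ∑ p, t p * φ (b (.inl p)) := by
    simp [Module.Basis.equivFun_symm_apply, Fintype.sum_sum_type]
  have ht0 : t ≠ 0 := by
    rintro rfl
    simp at ht
  have hcard : Fintype.card H = Fintype.card E + 1 := by
    have := LinearMap.finrank_range_add_finrank_ker α.mulVecLin
    rw [LinearMap.range_eq_top.mpr hS, finrank_top, hker, finrank_span_singleton ht0] at this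
    simpa using this.symm
  refine isContactForm_of_coadjKernel_eq_span ?_ (hb.coadjKernel_eq_span hφ hS hker) (hz ▸ ht)
  rw [Module.finrank_eq_card_basis b, Fintype.card_sum, hcard]
  exact ⟨Fintype.card E, by ring⟩

end IsWeightBasis

end WeightBasis

open TypeCPoset Matrix

variable {n : ℕ}

lemma Pos.val_pos (i : Pos n) : 0 < i.val := by
  have := i.2
  simp only [Finset.mem_Icc] at this
  omega

@[simp] lemma Pos.toIdx_inj {i j : Pos n} : i.toIdx = j.toIdx ↔ i = j :=
  ⟨fun h => Subtype.ext (congrArg (fun a : Idx n => a.val) h), fun h => h ▸ rfl⟩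

@[simp] lemma Pos.toIdx_neg_inj {i j : Pos n} : i.toIdx.neg = j.toIdx.neg ↔ i = j :=
  ⟨fun h => Subtype.ext (neg_inj.mp (congrArg (fun a : Idx n => a.val) h)), fun h => h ▸ rfl⟩

@[simp] lemma Pos.toIdx_neg_ne_toIdx (i j : Pos n) : i.toIdx.neg ≠ j.toIdx := by
  intro h
  have := congrArg Subtype.val h
  have := i.val_pos
  have := j.val_pos
  simp only [Pos.toIdx, Idx.neg] at *
  omega

@[simp] lemma Pos.toIdx_ne_toIdx_neg (i j : Pos n) : i.toIdx ≠ j.toIdx.neg :=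
  (Pos.toIdx_neg_ne_toIdx j i).symm

namespace TypeCPoset

variable (P : TypeCPoset n)

lemma lt_iff_neg_lt_neg {i j : ℤ} (h : i ≠ -j) : P.lt i j ↔ P.lt (-j) (-i) := by
  simp only [TypeCPoset.lt, P.nsymm h]
  constructor <;> rintro ⟨h1, h2⟩ <;> exact ⟨h1, by omega⟩

lemma lt_neg_comm {i j : Pos n} (h : P.lt (-i.val) j.val) : P.lt (-j.val) i.val := by
  by_cases hij : i = j
  · subst hij
    exact h
  · have hij' : -i.val ≠ -j.val := fun hc => hij (Subtype.ext (neg_inj.mp hc))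
    simpa using (P.lt_iff_neg_lt_neg hij').mp h

lemma lt_of_neg_lt_neg {i j : Pos n} (h : P.lt (-j.val) (-i.val)) : P.lt i.val j.val := by
  have := i.val_pos
  have := j.val_pos
  simpa using (P.lt_iff_neg_lt_neg (i := -j.val) (j := -i.val) (by omega)).mp h

lemma val_lt_of_lt {i j : ℤ} (h : P.lt i j) : i < j :=
  lt_of_le_of_ne (P.compat h.1) h.2

lemma not_hasLoopAt (hacyc : P.cycles = ∅) (i : Pos n) : ¬ P.HasLoopAt i := fun h =>
  Set.eq_empty_iff_forall_notMem.mp hacyc {s(i, i)} (Or.inl ⟨i, h, rfl⟩)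

lemma isAcyclic_RG (hacyc : P.cycles = ∅) : (RG P).IsAcyclic := fun v c hc =>
  Set.eq_empty_iff_forall_notMem.mp hacyc _ (Or.inr ⟨v, c, hc, rfl⟩)

end TypeCPoset

section Edges

variable (P : TypeCPoset n)

open scoped Classical in
/-- The non-dashed edges `{i, j}`, `i ≠ j`, of `RG(P)`, as pairs `(i, j)` with `i < j`. -/
noncomputable def ndPairs : Finset (Pos n × Pos n) :=
  Finset.univ.filter fun e => e.1 < e.2 ∧ P.lt (-e.1.val) e.2.val

open scoped Classical in
/-- The dashed edges of `RG(P)`: the pair `(i, j)` records `-j ≺ -i`, which forces `i < j`. -/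
noncomputable def dPairs : Finset (Pos n × Pos n) :=
  Finset.univ.filter fun e => P.lt (-e.2.val) (-e.1.val)

abbrev Edge : Type := {e // e ∈ ndPairs P} ⊕ {e // e ∈ dPairs P}

def weight : Matrix (Edge P) (Pos n) ℂ :=
  Sum.elim (fun e => Pi.single e.1.1 1 + Pi.single e.1.2 1)
    (fun e => Pi.single e.1.2 1 - Pi.single e.1.1 1)

lemma weight_mulVec_inl (u : Pos n → ℂ) (e : {e // e ∈ ndPairs P}) :
    (weight P *ᵥ u) (.inl e) = u e.1.1 + u e.1.2 := by
  change (Pi.single e.1.1 1 + Pi.single e.1.2 1 : Pos n → ℂ) ⬝ᵥ u = _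
  simp [add_dotProduct]

lemma weight_mulVec_inr (u : Pos n → ℂ) (e : {e // e ∈ dPairs P}) :
    (weight P *ᵥ u) (.inr e) = u e.1.2 - u e.1.1 := by
  change (Pi.single e.1.2 1 - Pi.single e.1.1 1 : Pos n → ℂ) ⬝ᵥ u = _
  simp [sub_dotProduct]

variable {P}

lemma mem_ndPairs {e : Pos n × Pos n} :
    e ∈ ndPairs P ↔ e.1 < e.2 ∧ P.lt (-e.1.val) e.2.val := by
  simp [ndPairs]

lemma mem_dPairs {e : Pos n × Pos n} : e ∈ dPairs P ↔ P.lt (-e.2.val) (-e.1.val) := by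
  simp [dPairs]

def Edge.ends : Edge P → Pos n × Pos n := Sum.elim Subtype.val Subtype.val

lemma Edge.ends_lt (e : Edge P) : e.ends.1 < e.ends.2 := by
  rcases e with ⟨e, he⟩ | ⟨e, he⟩
  · exact (mem_ndPairs.mp he).1
  · have := P.val_lt_of_lt (mem_dPairs.mp he)
    show e.1 < e.2
    rw [← Subtype.coe_lt_coe]
    omega

lemma Edge.adj (e : Edge P) : (RG P).Adj e.ends.1 e.ends.2 := by
  refine ⟨e.ends_lt.ne, ?_⟩
  rcases e with ⟨e, he⟩ | ⟨e, he⟩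
  · exact Or.inl (mem_ndPairs.mp he).2
  · exact Or.inr (Or.inr (Or.inr (mem_dPairs.mp he)))

lemma exists_edge_of_lt_neg {a b : Pos n} (hab : a ≠ b) (h : P.lt (-a.val) b.val) :
    ∃ e : Edge P, e.ends = (a, b) ∨ e.ends = (b, a) := by
  rcases lt_or_gt_of_ne hab with hlt | hlt
  · exact ⟨.inl ⟨(a, b), mem_ndPairs.mpr ⟨hlt, h⟩⟩, Or.inl rfl⟩
  · exact ⟨.inl ⟨(b, a), mem_ndPairs.mpr ⟨hlt, P.lt_neg_comm h⟩⟩, Or.inr rfl⟩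

lemma exists_edge_of_adj {a b : Pos n} (hab : (RG P).Adj a b) :
    ∃ e : Edge P, e.ends = (a, b) ∨ e.ends = (b, a) := by
  obtain ⟨hne, h | h | h | h⟩ := hab
  · exact exists_edge_of_lt_neg hne h
  · exact (exists_edge_of_lt_neg hne.symm h).imp fun _ => Or.symm
  · exact ⟨.inr ⟨(b, a), mem_dPairs.mpr h⟩, Or.inr rfl⟩
  · exact ⟨.inr ⟨(a, b), mem_dPairs.mpr h⟩, Or.inl rfl⟩

/-- A pair cannot carry both kinds of edge: `-j ≺ -i ≺ j` would be a chain of length three. -/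
lemma Edge.ends_injective (hP : P.HeightOne) : Function.Injective (Edge.ends (P := P)) := by
  rintro (⟨e, he⟩ | ⟨e, he⟩) (⟨f, hf⟩ | ⟨f, hf⟩) (h : e = f) <;> subst h
  · rfl
  · exact (hP _ _ _ (mem_dPairs.mp hf) (mem_ndPairs.mp he).2).elim
  · exact (hP _ _ _ (mem_dPairs.mp he) (mem_ndPairs.mp hf).2).elim
  · rfl

lemma card_edge_add_one (hP : P.HeightOne) (hconn : (RG P).Connected)
    (hacyc : P.cycles = ∅) : Fintype.card (Edge P) + 1 = Fintype.card (Pos n) := by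
  classical
  rw [← SimpleGraph.IsTree.card_edgeFinset ⟨hconn, P.isAcyclic_RG hacyc⟩,
    SimpleGraph.edgeFinset_card]
  congr 1
  refine Fintype.card_of_bijective (f := fun e => ⟨s(e.ends.1, e.ends.2), e.adj⟩) ⟨?_, ?_⟩
  · intro e f h
    apply Edge.ends_injective hP
    rcases Sym2.eq_iff.mp (congrArg Subtype.val h) with ⟨h1, h2⟩ | ⟨h1, h2⟩
    · exact Prod.ext h1 h2
    · have he := e.ends_lt
      have hf := f.ends_lt
      rw [h1, h2] at he
      exact (lt_asymm he hf).elim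
  · rintro ⟨x, hx⟩
    induction x using Sym2.ind with
    | _ a b =>
      obtain ⟨e, he | he⟩ := exists_edge_of_adj hx
      · exact ⟨e, by simp [he]⟩
      · exact ⟨e, by simp [he, Sym2.eq_swap]⟩

lemma eq_zero_of_weight_mulVec_eq_zero (hconn : (RG P).Connected) {u : Pos n → ℂ}
    (hu : weight P *ᵥ u = 0) {p₀ : Pos n} (h₀ : u p₀ = 0) : u = 0 := by
  have hedge : ∀ e : Edge P, u e.ends.1 = 0 ↔ u e.ends.2 = 0 := by
    rintro (e | e)
    · have := congrFun hu (.inl e)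
      rw [weight_mulVec_inl, Pi.zero_apply] at this
      show u e.1.1 = 0 ↔ u e.1.2 = 0
      exact ⟨fun h => by linear_combination this - h, fun h => by linear_combination this - h⟩
    · have := congrFun hu (.inr e)
      rw [weight_mulVec_inr, Pi.zero_apply, sub_eq_zero] at this
      exact ⟨fun h => this ▸ h, fun h => this ▸ h⟩
  have hadj : ∀ a b, (RG P).Adj a b → u a = 0 → u b = 0 := by
    intro a b hab ha
    obtain ⟨e, he | he⟩ := exists_edge_of_adj hab <;> have := hedge e <;> simp_all
  funext p
  induction (SimpleGraph.reachable_iff_reflTransGen _ _).mp (hconn p₀ p) with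
  | refl => exact h₀
  | tail _ hbc ih => exact hadj _ _ hbc ih

lemma weight_surjective_and_ker_eq_span (hP : P.HeightOne) (hconn : (RG P).Connected)
    (hacyc : P.cycles = ∅) (p₀ : Pos n) :
    Function.Surjective (weight P).mulVecLin ∧
      ∃ t, LinearMap.ker (weight P).mulVecLin = ℂ ∙ t ∧ t p₀ ≠ 0 := by
  refine LinearMap.surjective_and_ker_eq_span_of_disjoint
    (f := LinearMap.proj (R := ℂ) (φ := fun _ : Pos n => ℂ) p₀) ?_ ?_
  · exact Submodule.disjoint_def.mpr fun u hu h₀ =>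
      eq_zero_of_weight_mulVec_eq_zero hconn (LinearMap.mem_ker.mp hu) (LinearMap.mem_ker.mp h₀)
  · simpa [Module.finrank_fintype_fun_eq_card] using card_edge_add_one hP hconn hacyc

end Edges

section StandardBasis

variable (P : TypeCPoset n)

def StrictlyUpper (M : Mat n) : Prop := ∀ x y : Idx n, ¬ P.lt x.val y.val → M x y = 0

def basisMat : Pos n ⊕ Edge P → Mat n :=
  Sum.elim Dmat (Sum.elim (fun e => Rpm e.1.1 e.1.2) (fun e => Rdash e.1.1 e.1.2))

/-- The entry of a matrix that holds its coordinate along `basisMat P k`. -/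
def basisEntry : Pos n ⊕ Edge P → Idx n × Idx n :=
  Sum.elim (fun p => (p.toIdx.neg, p.toIdx.neg))
    (Sum.elim (fun e => (e.1.1.toIdx.neg, e.1.2.toIdx))
      (fun e => (e.1.2.toIdx.neg, e.1.1.toIdx.neg)))

variable {P}

lemma StrictlyUpper.mul_eq_zero (hP : P.HeightOne) {M N : Mat n} (hM : StrictlyUpper P M)
    (hN : StrictlyUpper P N) : M * N = 0 := by
  ext x z
  rw [mul_apply, Matrix.zero_apply]
  refine Finset.sum_eq_zero fun y _ => ?_
  by_cases hxy : P.lt x.val y.val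
  · by_cases hyz : P.lt y.val z.val
    · exact (hP _ _ _ hxy hyz).elim
    · rw [hN y z hyz, mul_zero]
  · rw [hM x y hxy, zero_mul]

lemma StrictlyUpper.lie_eq_zero (hP : P.HeightOne) {M N : Mat n} (hM : StrictlyUpper P M)
    (hN : StrictlyUpper P N) : ⁅M, N⁆ = 0 := by
  rw [Ring.lie_def, hM.mul_eq_zero hP hN, hN.mul_eq_zero hP hM, sub_zero]

lemma StrictlyUpper.add {M N : Mat n} (hM : StrictlyUpper P M) (hN : StrictlyUpper P N) :
    StrictlyUpper P (M + N) := fun x y h => by rw [Matrix.add_apply, hM x y h, hN x y h, add_zero]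

lemma StrictlyUpper.sub {M N : Mat n} (hM : StrictlyUpper P M) (hN : StrictlyUpper P N) :
    StrictlyUpper P (M - N) := fun x y h => by rw [Matrix.sub_apply, hM x y h, hN x y h, sub_zero]

lemma strictlyUpper_single {a b : Idx n} (h : P.lt a.val b.val) (c : ℂ) :
    StrictlyUpper P (single a b c) := by
  intro x y hxy
  rw [single_apply, if_neg]
  rintro ⟨rfl, rfl⟩
  exact hxy h

lemma strictlyUpper_basisMat_inr (e : Edge P) : StrictlyUpper P (basisMat P (.inr e)) := by
  rcases e with ⟨e, he⟩ | ⟨e, he⟩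
  · have h := (mem_ndPairs.mp he).2
    exact (strictlyUpper_single h 1).add (strictlyUpper_single (P.lt_neg_comm h) 1)
  · have h := mem_dPairs.mp he
    exact (strictlyUpper_single h 1).sub (strictlyUpper_single (P.lt_of_neg_lt_neg h) 1)

lemma Dmat_eq_diagonal (p : Pos n) :
    Dmat p = diagonal (Pi.single p.toIdx.neg 1 - Pi.single p.toIdx 1) := by
  rw [Dmat, ← diagonal_single, ← diagonal_single, diagonal_sub]
  rfl

lemma lie_basisMat_inl_inl (p q : Pos n) : ⁅basisMat P (.inl p), basisMat P (.inl q)⁆ = 0 := by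
  simp only [basisMat, Sum.elim_inl, Dmat_eq_diagonal, lie_diagonal_diagonal]

lemma lie_basisMat_inl_inr (p : Pos n) (e : Edge P) :
    ⁅basisMat P (.inl p), basisMat P (.inr e)⁆ = weight P e p • basisMat P (.inr e) := by
  rcases e with e | e
  · simp only [basisMat, weight, Sum.elim_inl, Sum.elim_inr, Dmat_eq_diagonal, Rpm, lie_add,
      lie_diagonal_single]
    simp [Pi.single_apply, smul_add, @eq_comm _ p, add_comm]
  · simp only [basisMat, weight, Sum.elim_inl, Sum.elim_inr, Dmat_eq_diagonal, Rdash, lie_sub,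
      lie_diagonal_single]
    simp [Pi.single_apply, smul_sub, @eq_comm _ p, neg_add_eq_sub]

lemma basisMat_apply_basisEntry (k k' : Pos n ⊕ Edge P) :
    basisMat P k (basisEntry P k').1 (basisEntry P k').2 =
      (Pi.single k 1 : Pos n ⊕ Edge P → ℂ) k' := by
  rcases k with p | ⟨⟨i, j⟩, he⟩ | ⟨⟨i, j⟩, he⟩ <;>
    rcases k' with q | ⟨⟨k, l⟩, hf⟩ | ⟨⟨k, l⟩, hf⟩ <;>
    simp [basisMat, basisEntry, Dmat, Rpm, Rdash, single_apply, Pi.single_apply]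
  · exact if_congr eq_comm rfl rfl
  · rintro rfl rfl
    exact lt_irrefl _ (Edge.ends_lt (.inr ⟨_, hf⟩))
  · have hij := Edge.ends_lt (.inl ⟨_, he⟩)
    have hkl := Edge.ends_lt (.inl ⟨_, hf⟩)
    have : ¬(j = k ∧ i = l) := by
      rintro ⟨rfl, rfl⟩
      exact lt_asymm hij hkl
    rw [if_neg this, add_zero]
    exact if_congr (by tauto) rfl rfl
  · rintro rfl rfl
    exact lt_irrefl _ (Edge.ends_lt (.inr ⟨_, he⟩))
  · exact if_congr (by tauto) rfl rfl

variable (P) in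
lemma linearIndependent_basisMat : LinearIndependent ℂ (basisMat P) := by
  refine LinearIndependent.of_comp
    (LinearMap.pi fun k => entryLinearMap ℂ ℂ (basisEntry P k).1 (basisEntry P k).2) ?_
  convert (Pi.basisFun ℂ (Pos n ⊕ Edge P)).linearIndependent using 1
  · funext k k'
    simp only [Function.comp_apply, LinearMap.pi_apply, entryLinearMap_apply, Pi.basisFun_apply]
    exact basisMat_apply_basisEntry k k'
  · rfl

lemma span_range_basisMat (hacyc : P.cycles = ∅) :
    Submodule.span ℂ (Set.range (basisMat P)) = Submodule.span ℂ (gcSet P) := by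
  apply le_antisymm <;> rw [Submodule.span_le]
  · rintro _ ⟨p | ⟨e, he⟩ | ⟨e, he⟩, rfl⟩ <;> apply Submodule.subset_span
    · exact Or.inl ⟨p, rfl⟩
    · have h := (mem_ndPairs.mp he).2
      exact Or.inr (Or.inr (Or.inl ⟨_, _, h, P.lt_neg_comm h, rfl⟩))
    · exact Or.inr (Or.inl ⟨_, _, mem_dPairs.mp he, rfl⟩)
  · rintro _ (⟨p, rfl⟩ | ⟨i, j, h, rfl⟩ | ⟨i, j, h, -, rfl⟩ | ⟨i, h, -⟩)
    · exact Submodule.subset_span ⟨.inl p, rfl⟩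
    · exact Submodule.subset_span ⟨.inr (.inr ⟨(i, j), mem_dPairs.mpr h⟩), rfl⟩
    · have hij : i ≠ j := by
        rintro rfl
        exact P.not_hasLoopAt hacyc i h
      rcases lt_or_gt_of_ne hij with hlt | hlt
      · exact Submodule.subset_span ⟨.inr (.inl ⟨(i, j), mem_ndPairs.mpr ⟨hlt, h⟩⟩), rfl⟩
      · rw [Rpm, add_comm]
        exact Submodule.subset_span
          ⟨.inr (.inl ⟨(j, i), mem_ndPairs.mpr ⟨hlt, P.lt_neg_comm h⟩⟩), rfl⟩
    · exact (P.not_hasLoopAt hacyc i h).elim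

lemma exists_basis_eq_basisMat (hacyc : P.cycles = ∅) (g : LieSubalgebra ℂ (Mat n))
    (hg : g.toSubmodule = Submodule.span ℂ (gcSet P)) :
    ∃ b : Module.Basis (Pos n ⊕ Edge P) ℂ g, ∀ k, (b k : Mat n) = basisMat P k :=
  ⟨(Module.Basis.span (linearIndependent_basisMat P)).map
      (LinearEquiv.ofEq _ _ ((span_range_basisMat hacyc).trans hg.symm)),
    fun k => by
      simp only [Module.Basis.map_apply, Module.Basis.span_apply]
      rfl⟩

lemma isWeightBasis_of_eq_basisMat (hP : P.HeightOne) {g : LieSubalgebra ℂ (Mat n)}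
    {b : Module.Basis (Pos n ⊕ Edge P) ℂ g} (hb : ∀ k, (b k : Mat n) = basisMat P k) :
    IsWeightBasis b (weight P) := by
  refine ⟨fun p q => ?_, fun e f => ?_, fun p e => ?_⟩ <;> apply Subtype.ext <;>
    simp only [LieSubalgebra.coe_bracket, SetLike.val_smul, hb]
  · exact lie_basisMat_inl_inl p q
  · exact (strictlyUpper_basisMat_inr e).lie_eq_zero hP (strictlyUpper_basisMat_inr f)
  · exact lie_basisMat_inl_inr p e

end StandardBasis

theorem contact_of_tree_general (n : ℕ) (P : TypeCPoset n) (hP : P.HeightOne)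
    (hconn : (TypeCPoset.RG P).Connected) (hacyc : P.cycles = ∅)
    (p₀ : Pos n)
    (g : LieSubalgebra ℂ (Mat n))
    (hg : g.toSubmodule = Submodule.span ℂ (TypeCPoset.gcSet P)) :
    IsContact ↥g ∧
      ∀ φ : Module.Dual ℂ ↥g,
        (∀ x : ↥g, (x : Mat n) = TypeCPoset.Dmat p₀ → φ x = 1) →
        (∀ (x : ↥g) (i : Pos n), i ≠ p₀ → (x : Mat n) = TypeCPoset.Dmat i → φ x = 0) →
        (∀ (x : ↥g) (i j : Pos n), P.lt (-i.val) j.val → P.lt (-j.val) i.val →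
          (x : Mat n) = TypeCPoset.Rpm i j → φ x = 1) →
        (∀ (x : ↥g) (i j : Pos n), i.val < j.val → P.lt (-j.val) (-i.val) →
          (x : Mat n) = TypeCPoset.Rdash i j → φ x = 1) →
        IsContactForm ↥g φ := by
  obtain ⟨b, hb⟩ := exists_basis_eq_basisMat hacyc g hg
  obtain ⟨hS, t, hker, ht⟩ := weight_surjective_and_ker_eq_span hP hconn hacyc p₀
  have hcontact (φ : Module.Dual ℂ g) (hφD : ∀ p, φ (b (.inl p)) = if p = p₀ then 1 else 0)
      (hφR : ∀ e, φ (b (.inr e)) = 1) : IsContactForm g φ :=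
    (isWeightBasis_of_eq_basisMat hP hb).isContactForm hφR hS hker (by simpa [hφD] using ht)
  refine ⟨⟨b.constr ℂ (Sum.elim (fun p => if p = p₀ then 1 else 0) 1),
    hcontact _ (by simp) (by simp)⟩, fun φ hD₀ hD hRpm hRdash => hcontact φ ?_ ?_⟩
  · intro p
    split_ifs with hp
    · exact hD₀ _ (hp ▸ hb _)
    · exact hD _ p hp (hb _)
  · rintro (⟨e, he⟩ | ⟨e, he⟩)
    · have h := (mem_ndPairs.mp he).2
      exact hRpm _ _ _ h (P.lt_neg_comm h) (hb _)
    · exact hRdash _ _ _ (Edge.ends_lt (.inr ⟨e, he⟩)) (mem_dPairs.mp he) (hb _)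

/-- **Theorem.** If `P` is a type-C poset of height one such that `RG(P)` is a tree with
more than one vertex, then `g_C(P)` is contact.  Moreover, if `p₀` is a fixed vertex of
degree one in `RG(P)`, then the functional
`φ = (D_{p₀})* + Σ_{{p,q} non-dashed} (R^±_{p,q})* + Σ_{{p,q} dashed, p<q} (R_{p,q})*`
(i.e. the linear functional taking the value `1` on `D_{p₀}`, on each `R^±_{p,q}`, and
on each `R_{p,q}`, and `0` on the remaining standard basis vectors) is a contact form
for `g_C(P)`. -/
theorem contact_of_tree (n : ℕ) (P : TypeCPoset n) (hP : P.HeightOne)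
    (hconn : (TypeCPoset.RG P).Connected) (hacyc : P.cycles = ∅)
    (hV : 1 < Fintype.card (Pos n))
    (p₀ : Pos n) (hdeg : ∃! q : Pos n, (TypeCPoset.RG P).Adj p₀ q)
    (g : LieSubalgebra ℂ (Mat n))
    (hg : g.toSubmodule = Submodule.span ℂ (TypeCPoset.gcSet P)) :
    IsContact ↥g ∧
      ∀ φ : Module.Dual ℂ ↥g,
        (∀ x : ↥g, (x : Mat n) = TypeCPoset.Dmat p₀ → φ x = 1) →
        (∀ (x : ↥g) (i : Pos n), i ≠ p₀ → (x : Mat n) = TypeCPoset.Dmat i → φ x = 0) →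
        (∀ (x : ↥g) (i j : Pos n), P.lt (-i.val) j.val → P.lt (-j.val) i.val →
          (x : Mat n) = TypeCPoset.Rpm i j → φ x = 1) →
        (∀ (x : ↥g) (i j : Pos n), i.val < j.val → P.lt (-j.val) (-i.val) →
          (x : Mat n) = TypeCPoset.Rdash i j → φ x = 1) →
        IsContactForm ↥g φ :=
  contact_of_tree_general n P hP hconn hacyc p₀ g hg

end LiePoset
end

section
/- Let N ≥ 1, let i_0, i_1, …, i_n ∈ {1,…,N} satisfy i_j ≠ i_{j+1} for all 0 ≤ j ≤ n−1, and let vectors L_0,…,L_n in ℂ^N be given with L_j = e_{i_j} − e_{i_{j+1}} or L_j = −e_{i_j} − e_{i_{j+1}} for 0 ≤ j ≤ n−1, and L_n = e_{i_n} − e_{i_0} or L_n = −e_{i_n} − e_{i_0}. If the number of indices k for which L_k is of the second ('minus-minus') form is odd, then there exist constants c_0,…,c_n ∈ {−1,1} such that the sum of c_j L_j over j = 0,…,n equals −2 e_{i_0}; if that number is even, then there exist constants c_0,…,c_n ∈ {−1,1} such that the sum of c_j L_j over j = 0,…,n equals 0. -/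
/-! Each `L k` is `σ k • e (i k) - e (i (k + 1))` with `σ k = ±1`, where `σ k = -1` exactly
for the minus-minus form and indices are read cyclically. With `c k = s * σ 0 ⋯ σ k` the sum
`∑ c k • L k` telescopes to `(s - s * σ 0 ⋯ σ n) • e (i 0)`, and `σ 0 ⋯ σ n` is `-1` raised to the
number of minus-minus forms; take `s = -1` in the odd case and `s = 1` in the even case. -/

open Finset

section SignedTelescope

variable {R M : Type*} [CommRing R] [AddCommGroup M] [Module R M]

lemma eq_ite_neg_one_smul_sub [DecidableEq M] {L a b : M} (h : L = a - b ∨ L = -a - b) :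
    L = (if L = -a - b then -1 else 1 : R) • a - b := by
  split_ifs with hneg
  · rw [neg_one_smul, hneg]
  · rw [one_smul, h.resolve_right hneg]

lemma mul_eq_one_or_neg_one {x y : R} (hx : x = 1 ∨ x = -1) (hy : y = 1 ∨ y = -1) :
    x * y = 1 ∨ x * y = -1 := by
  rcases hx with rfl | rfl <;> rcases hy with rfl | rfl <;> simp

lemma sum_prod_smul_eq_sub_of_eq_smul_sub (σ : ℕ → R) (hσ : ∀ k, σ k * σ k = 1) (g L : ℕ → M)
    (m : ℕ) (hL : ∀ k < m, L k = σ k • g k - g (k + 1)) :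
    ∑ j ∈ range m, (∏ t ∈ range (j + 1), σ t) • L j = g 0 - (∏ t ∈ range m, σ t) • g m := by
  have hterm : ∀ j < m, (∏ t ∈ range (j + 1), σ t) • L j =
      (∏ t ∈ range j, σ t) • g j - (∏ t ∈ range (j + 1), σ t) • g (j + 1) := by
    intro j hj
    rw [hL j hj, smul_sub, smul_smul, prod_range_succ, mul_assoc, hσ, mul_one]
  rw [sum_congr rfl fun j hj => hterm j (mem_range.mp hj), sum_range_sub', prod_range_zero,
    one_smul]

lemma exists_sign_sum_smul_eq (σ : ℕ → R) (hσ : ∀ k, σ k = 1 ∨ σ k = -1) (g L : ℕ → M)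
    (m : ℕ) (hL : ∀ k < m, L k = σ k • g k - g (k + 1)) (hg : g m = g 0)
    (e : R) (he : e = 1 ∨ e = -1) :
    ∃ c : ℕ → R, (∀ j, c j = 1 ∨ c j = -1) ∧
      ∑ j ∈ range m, c j • L j = (e - e * ∏ t ∈ range m, σ t) • g 0 := by
  have hsq : ∀ k, σ k * σ k = 1 := fun k => by rcases hσ k with h | h <;> simp [h]
  refine ⟨fun j => e * ∏ t ∈ range (j + 1), σ t, fun j => mul_eq_one_or_neg_one he
    (prod_induction σ (fun x => x = 1 ∨ x = -1) (fun _ _ => mul_eq_one_or_neg_one) (Or.inl rfl)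
      fun t _ => hσ t), ?_⟩
  simp only [mul_smul, ← smul_sum, sum_prod_smul_eq_sub_of_eq_smul_sub σ hsq g L m hL, hg,
    smul_sub, sub_smul]

end SignedTelescope

lemma prod_range_succ_ite_neg_one {R : Type*} [CommMonoid R] [HasDistribNeg R] (Q : ℕ → Prop)
    [DecidablePred Q] (n : ℕ) :
    ∏ k ∈ range (n + 1), (if Q k then -1 else 1 : R) = (-1) ^ Nat.card {k : ℕ // k ≤ n ∧ Q k} := by
  have hcard : Nat.card {k : ℕ // k ≤ n ∧ Q k} = #{k ∈ range (n + 1) | Q k} := by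
    have hset : {k : ℕ | k ≤ n ∧ Q k} = ↑{k ∈ range (n + 1) | Q k} := by
      ext k
      simp
    calc Nat.card {k : ℕ // k ≤ n ∧ Q k} = Set.ncard {k : ℕ | k ≤ n ∧ Q k} := rfl
      _ = _ := by rw [hset, Set.ncard_coe_finset]
  rw [prod_ite, prod_const, prod_const_one, mul_one, hcard]

theorem cycle_sign_combination_general (N n : ℕ) (i : ℕ → Fin N)
    (L : ℕ → (Fin N → ℂ))
    (hL : ∀ j < n,
      L j = (Pi.single (i j) (1 : ℂ) : Fin N → ℂ) - (Pi.single (i (j + 1)) (1 : ℂ) : Fin N → ℂ) ∨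
      L j = -(Pi.single (i j) (1 : ℂ) : Fin N → ℂ) - (Pi.single (i (j + 1)) (1 : ℂ) : Fin N → ℂ))
    (hLn : L n = (Pi.single (i n) (1 : ℂ) : Fin N → ℂ) - (Pi.single (i 0) (1 : ℂ) : Fin N → ℂ) ∨
      L n = -(Pi.single (i n) (1 : ℂ) : Fin N → ℂ) - (Pi.single (i 0) (1 : ℂ) : Fin N → ℂ)) :
    (Odd (Nat.card {k : ℕ // k ≤ n ∧
        L k = -(Pi.single (i k) (1 : ℂ) : Fin N → ℂ) -
          (Pi.single (i (if k = n then 0 else k + 1)) (1 : ℂ) : Fin N → ℂ)}) →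
      ∃ c : ℕ → ℂ, (∀ j ≤ n, c j = 1 ∨ c j = -1) ∧
        ∑ j ∈ Finset.range (n + 1), c j • L j =
          (-2 : ℂ) • (Pi.single (i 0) (1 : ℂ) : Fin N → ℂ)) ∧
    (Even (Nat.card {k : ℕ // k ≤ n ∧
        L k = -(Pi.single (i k) (1 : ℂ) : Fin N → ℂ) -
          (Pi.single (i (if k = n then 0 else k + 1)) (1 : ℂ) : Fin N → ℂ)}) →
      ∃ c : ℕ → ℂ, (∀ j ≤ n, c j = 1 ∨ c j = -1) ∧
        ∑ j ∈ Finset.range (n + 1), c j • L j = 0) := by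
  classical
  set e : Fin N → Fin N → ℂ := fun a => Pi.single a 1
  set σ : ℕ → ℂ := fun k => if L k = -e (i k) - e (i (if k = n then 0 else k + 1)) then -1 else 1
  -- the cycle `i 0, …, i n` unrolled to a path that returns to `i 0` at time `n + 1`
  set g : ℕ → Fin N → ℂ := fun k => e (i (if k = n + 1 then 0 else k))
  have hσ : ∀ k, σ k = 1 ∨ σ k = -1 := fun k => by
    by_cases h : L k = -e (i k) - e (i (if k = n then 0 else k + 1)) <;> simp [σ, h]
  have hLσ : ∀ k < n + 1, L k = σ k • g k - g (k + 1) := by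
    intro k hk
    have hform : L k = e (i k) - e (i (if k = n then 0 else k + 1)) ∨
        L k = -e (i k) - e (i (if k = n then 0 else k + 1)) := by
      rcases (Nat.lt_succ_iff.mp hk).lt_or_eq with hkn | rfl
      · simpa [hkn.ne] using hL k hkn
      · simpa using hLn
    have hgk : g k = e (i k) := by simp [g, hk.ne]
    have hgk1 : g (k + 1) = e (i (if k = n then 0 else k + 1)) := by
      by_cases hkn : k = n <;> simp [g, hkn]
    rw [hgk, hgk1]
    exact eq_ite_neg_one_smul_sub hform
  have hprod : ∏ k ∈ range (n + 1), σ k = (-1) ^ Nat.card {k : ℕ // k ≤ n ∧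
      L k = -e (i k) - e (i (if k = n then 0 else k + 1))} :=
    prod_range_succ_ite_neg_one _ n
  have hsigns := exists_sign_sum_smul_eq σ hσ g L (n + 1) hLσ (by simp [g])
  constructor
  · intro hodd
    obtain ⟨c, hc, hsum⟩ := hsigns (-1) (Or.inr rfl)
    refine ⟨c, fun j _ => hc j, ?_⟩
    rw [hsum, hprod, hodd.neg_one_pow]
    norm_num [g, e]
  · intro heven
    obtain ⟨c, hc, hsum⟩ := hsigns 1 (Or.inl rfl)
    refine ⟨c, fun j _ => hc j, ?_⟩
    rw [hsum, hprod, heven.neg_one_pow]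
    norm_num

/-- **Lemma.** Let `i₀, …, i_n ∈ {1, …, N}` with `i_j ≠ i_{j+1}` for `0 ≤ j ≤ n-1`, and
let `L₀, …, L_n ∈ ℂ^N` satisfy `L_j = e_{i_j} - e_{i_{j+1}}` or
`L_j = -e_{i_j} - e_{i_{j+1}}` for `0 ≤ j ≤ n-1` and `L_n = e_{i_n} - e_{i_0}` or
`L_n = -e_{i_n} - e_{i_0}`.  If the number of indices `k` for which `L_k` is of the
second ("minus-minus") form is odd, then there are constants `c_j ∈ {-1, 1}` with
`∑_{j=0}^n c_j L_j = -2 e_{i_0}`; if that number is even, then there are constants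
`c_j ∈ {-1, 1}` with `∑_{j=0}^n c_j L_j = 0`. -/
theorem cycle_sign_combination (N n : ℕ) (hN : 1 ≤ N) (i : ℕ → Fin N)
    (hadj : ∀ j < n, i j ≠ i (j + 1))
    (L : ℕ → (Fin N → ℂ))
    (hL : ∀ j < n,
      L j = (Pi.single (i j) (1 : ℂ) : Fin N → ℂ) - (Pi.single (i (j + 1)) (1 : ℂ) : Fin N → ℂ) ∨
      L j = -(Pi.single (i j) (1 : ℂ) : Fin N → ℂ) - (Pi.single (i (j + 1)) (1 : ℂ) : Fin N → ℂ))
    (hLn : L n = (Pi.single (i n) (1 : ℂ) : Fin N → ℂ) - (Pi.single (i 0) (1 : ℂ) : Fin N → ℂ) ∨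
      L n = -(Pi.single (i n) (1 : ℂ) : Fin N → ℂ) - (Pi.single (i 0) (1 : ℂ) : Fin N → ℂ)) :
    (Odd (Nat.card {k : ℕ // k ≤ n ∧
        L k = -(Pi.single (i k) (1 : ℂ) : Fin N → ℂ) -
          (Pi.single (i (if k = n then 0 else k + 1)) (1 : ℂ) : Fin N → ℂ)}) →
      ∃ c : ℕ → ℂ, (∀ j ≤ n, c j = 1 ∨ c j = -1) ∧
        ∑ j ∈ Finset.range (n + 1), c j • L j =
          (-2 : ℂ) • (Pi.single (i 0) (1 : ℂ) : Fin N → ℂ)) ∧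
    (Even (Nat.card {k : ℕ // k ≤ n ∧
        L k = -(Pi.single (i k) (1 : ℂ) : Fin N → ℂ) -
          (Pi.single (i (if k = n then 0 else k + 1)) (1 : ℂ) : Fin N → ℂ)}) →
      ∃ c : ℕ → ℂ, (∀ j ≤ n, c j = 1 ∨ c j = -1) ∧
        ∑ j ∈ Finset.range (n + 1), c j • L j = 0) :=
  cycle_sign_combination_general N n i L hL hLn
end
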